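/- arXiv:2507.05097 — 2 statements merged into one kernel-verified Lean document; each statement's English description precedes it below -/
import Mathlib

section
/- Let V be a finite-dimensional real inner product space, α ∈ ℝ, and T : V → V a linear map of the form T = α·Id + J with J skew-adjoint. Then for any orthonormal basis (Ā_i) and positive reals (g_i), defining A_i := Ā_i/√g_i, one has Σ_{i,j} (g_j/g_i)⟨T Ā_i, Ā_j⟩² − Σ_i ⟨T Ā_i, T Ā_i⟩ = Σ_{i,j} ⟨J Ā_i, Ā_j⟩² (g_j/g_i − 1) (equivalently, the squared norm of the g-symmetrization of T satisfies ‖S^g(T)‖² = α² dim V + (1/4) Σ_{i,j} ⟨J Ā_i, Ā_j⟩² (g_i/g_j + g_j/g_i − 2), where g(x,y) = ⟨Px, y⟩ with P diagonal with eigenvalues g_i in the basis Ā_i and S^g(T) = (T + T^{t_g})/2). -/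
open scoped RealInnerProductSpace

/-! Expanding `⟪T Ā_i, T Ā_i⟫` in the basis turns the left side into
`Σ_{i,j} ⟪T Ā_i, Ā_j⟫² (g_j/g_i − 1)`. The diagonal weights vanish, and off the diagonal
`⟪T Ā_i, Ā_j⟫ = ⟪J Ā_i, Ā_j⟫` since the `α • id` part only has diagonal entries. -/

theorem OrthonormalBasis.sum_mul_sq_inner_sub_inner_self {ι V : Type*} [Fintype ι]
    [NormedAddCommGroup V] [InnerProductSpace ℝ V] (b : OrthonormalBasis ι ℝ V)
    (w : ι → ℝ) (x : V) :
    ∑ j, w j * ⟪x, b j⟫ ^ 2 - ⟪x, x⟫ = ∑ j, ⟪x, b j⟫ ^ 2 * (w j - 1) := by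
  rw [real_inner_self_eq_norm_sq, ← b.sum_sq_inner_left, ← Finset.sum_sub_distrib]
  exact Finset.sum_congr rfl fun j _ => by ring

theorem Orthonormal.inner_smul_id_add_apply_of_ne {ι V : Type*} [NormedAddCommGroup V]
    [InnerProductSpace ℝ V] {v : ι → V} (hv : Orthonormal ℝ v) (α : ℝ) (J : V →ₗ[ℝ] V)
    {i j : ι} (hij : i ≠ j) :
    ⟪(α • LinearMap.id + J : V →ₗ[ℝ] V) (v i), v j⟫ = ⟪J (v i), v j⟫ := by
  simp [inner_add_left, real_inner_smul_left, hv.2 hij]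

theorem stmt12_general {V : Type*} [NormedAddCommGroup V] [InnerProductSpace ℝ V]
    {d : ℕ} (b : OrthonormalBasis (Fin d) ℝ V) (g : Fin d → ℝ)
    (hg : ∀ i, 0 < g i) (α : ℝ) (J T : V →ₗ[ℝ] V)
    (hT : T = α • LinearMap.id + J) :
    (∑ i, ∑ j, (g j / g i) * ⟪T (b i), b j⟫ ^ 2) - ∑ i, ⟪T (b i), T (b i)⟫
      = ∑ i, ∑ j, ⟪J (b i), b j⟫ ^ 2 * (g j / g i - 1) := by
  simp_rw [← Finset.sum_sub_distrib, b.sum_mul_sq_inner_sub_inner_self]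
  refine Finset.sum_congr rfl fun i _ => Finset.sum_congr rfl fun j _ => ?_
  rcases eq_or_ne i j with rfl | hij
  · simp [div_self (hg i).ne']
  · rw [hT, b.orthonormal.inner_smul_id_add_apply_of_ne α J hij]

/-- For `T = α·Id + J` with `J` skew-adjoint, the moment-map identity
`Σ_{i,j} (g_j/g_i)⟨T Ā_i, Ā_j⟩² − Σ_i ⟨T Ā_i, T Ā_i⟩
  = Σ_{i,j} ⟨J Ā_i, Ā_j⟩² (g_j/g_i − 1)` holds. -/
theorem stmt12 {V : Type*} [NormedAddCommGroup V] [InnerProductSpace ℝ V]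
    {d : ℕ} (b : OrthonormalBasis (Fin d) ℝ V) (g : Fin d → ℝ)
    (hg : ∀ i, 0 < g i) (α : ℝ) (J T : V →ₗ[ℝ] V)
    (hskew : ∀ x y : V, ⟪J x, y⟫ = -⟪x, J y⟫)
    (hT : T = α • LinearMap.id + J) :
    (∑ i, ∑ j, (g j / g i) * ⟪T (b i), b j⟫ ^ 2) - ∑ i, ⟪T (b i), T (b i)⟫
      = ∑ i, ∑ j, ⟪J (b i), b j⟫ ^ 2 * (g j / g i - 1) :=
  stmt12_general b g hg α J T hT
end

section
/- Let X be a contractible topological space, A ⊆ X an open subset, and suppose there exists a continuous semiflow φ : [0,∞) × X → X with φ₀ = id, φ_t(A) ⊆ A for all t ≥ 0, and such that for every compact K ⊆ X there is a finite time T_K with φ_t(K) ⊆ A for all t ≥ T_K (A is a global attractor). Then every map from a sphere Sᵈ into A is nullhomotopic in A; i.e. all homotopy groups π_d(A) vanish. -/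
/-!
Contract `f` inside `X` by a homotopy `G`. Its image is compact, so the flow carries all of it
into `A` by some time `T`, and then `φ_T ∘ G` is a nullhomotopy of `φ_T ∘ f` inside `A`. Since `A`
is invariant, flowing `f` for times `s ∈ [0, T]` joins `f` to `φ_T ∘ f` inside `A`.
-/

open scoped NNReal

namespace ContinuousMap

variable {X Y : Type*} [TopologicalSpace X] [TopologicalSpace Y]

def Homotopy.flowFor (Φ : C(ℝ≥0 × X, X)) (hid : ∀ x, Φ (0, x) = x) (f : C(Y, X)) (T : ℝ≥0) :
    Homotopy f ((Φ.curry T).comp f) where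
  toFun p := Φ (Real.toNNReal p.1 * T, f p.2)
  continuous_toFun := by fun_prop
  map_zero_left y := by simp [hid]
  map_one_left y := by simp

theorem homotopicWith_flowFor (A : Set X) (Φ : C(ℝ≥0 × X, X)) (hid : ∀ x, Φ (0, x) = x)
    (hinv : ∀ t, ∀ x ∈ A, Φ (t, x) ∈ A) (f : C(Y, X)) (hf : ∀ y, f y ∈ A) (T : ℝ≥0) :
    HomotopicWith f ((Φ.curry T).comp f) (fun g => ∀ y, g y ∈ A) :=
  ⟨{ toHomotopy := Homotopy.flowFor Φ hid f T
     prop' := fun _ y => hinv _ _ (hf y) }⟩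

theorem Homotopy.homotopicWith_comp_of_mem (A : Set X) (φ : C(X, X)) {f₀ f₁ : C(Y, X)}
    (G : Homotopy f₀ f₁) (hG : ∀ p, φ (G p) ∈ A) :
    HomotopicWith (φ.comp f₀) (φ.comp f₁) (fun g => ∀ y, g y ∈ A) :=
  ⟨{ toHomotopy := (Homotopy.refl φ).comp G
     prop' := fun t y => hG (t, y) }⟩

theorem HomotopicWith.exists_homotopy_mem [Nonempty Y] {A : Set X} {f : C(Y, X)} {c : X}
    (h : HomotopicWith f (const Y c) (fun g => ∀ y, g y ∈ A)) :
    c ∈ A ∧ ∃ H : Homotopy f (const Y c), ∀ p, H p ∈ A := by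
  obtain ⟨H⟩ := h
  refine ⟨?_, H.toHomotopy, fun p => H.prop p.1 p.2⟩
  simpa using H.prop 1 (Classical.arbitrary Y)

theorem exists_homotopy_const_mem_of_absorbing [ContractibleSpace X] [CompactSpace Y]
    [Nonempty Y] (A : Set X) (Φ : C(ℝ≥0 × X, X)) (hid : ∀ x, Φ (0, x) = x)
    (hinv : ∀ t, ∀ x ∈ A, Φ (t, x) ∈ A)
    (hattr : ∀ K : Set X, IsCompact K → ∃ T : ℝ≥0, ∀ t ≥ T, ∀ x ∈ K, Φ (t, x) ∈ A)
    (f : C(Y, X)) (hf : ∀ y, f y ∈ A) :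
    ∃ c ∈ A, ∃ H : Homotopy f (const Y c), ∀ p, H p ∈ A := by
  obtain ⟨x₀, ⟨G⟩⟩ : f.Nullhomotopic := by simpa using (id_nullhomotopic X).comp_left f
  obtain ⟨T, hT⟩ := hattr _ (isCompact_range G.continuous)
  have hflow := homotopicWith_flowFor A Φ hid hinv f hf T
  have hcontract := Homotopy.homotopicWith_comp_of_mem A (Φ.curry T) G
    fun p => hT T le_rfl _ ⟨p, rfl⟩
  rw [comp_const] at hcontract
  exact ⟨_, (hflow.trans hcontract).exists_homotopy_mem⟩

end ContinuousMap

theorem stmt14_general {X : Type*} [TopologicalSpace X] [ContractibleSpace X]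
    (A : Set X) (φ : ℝ≥0 × X → X) (hφ : Continuous φ)
    (hid : ∀ x, φ (0, x) = x)
    (hinv : ∀ t : ℝ≥0, ∀ x ∈ A, φ (t, x) ∈ A)
    (hattr : ∀ K : Set X, IsCompact K →
      ∃ T : ℝ≥0, ∀ t ≥ T, ∀ x ∈ K, φ (t, x) ∈ A)
    (d : ℕ)
    (f : C(Metric.sphere (0 : EuclideanSpace ℝ (Fin (d + 1))) 1, X))
    (hf : ∀ z, f z ∈ A) :
    ∃ c ∈ A, ∃ H : ContinuousMap.Homotopy f (ContinuousMap.const _ c),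
      ∀ p, H p ∈ A := by
  have : Nonempty (Metric.sphere (0 : EuclideanSpace ℝ (Fin (d + 1))) 1) :=
    (NormedSpace.sphere_nonempty.mpr zero_le_one).to_subtype
  exact ContinuousMap.exists_homotopy_const_mem_of_absorbing A ⟨φ, hφ⟩ hid hinv hattr f hf

/-- If `A` is an open global attractor of a continuous semiflow on a
contractible space `X`, invariant under the flow, then every sphere map into
`A` is nullhomotopic within `A`. -/
theorem stmt14 {X : Type*} [TopologicalSpace X] [ContractibleSpace X]
    (A : Set X) (hA : IsOpen A) (φ : ℝ≥0 × X → X) (hφ : Continuous φ)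
    (hid : ∀ x, φ (0, x) = x)
    (hsemi : ∀ s t : ℝ≥0, ∀ x, φ (s + t, x) = φ (s, φ (t, x)))
    (hinv : ∀ t : ℝ≥0, ∀ x ∈ A, φ (t, x) ∈ A)
    (hattr : ∀ K : Set X, IsCompact K →
      ∃ T : ℝ≥0, ∀ t ≥ T, ∀ x ∈ K, φ (t, x) ∈ A)
    (d : ℕ)
    (f : C(Metric.sphere (0 : EuclideanSpace ℝ (Fin (d + 1))) 1, X))
    (hf : ∀ z, f z ∈ A) :
    ∃ c ∈ A, ∃ H : ContinuousMap.Homotopy f (ContinuousMap.const _ c),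
      ∀ p, H p ∈ A :=
  stmt14_general A φ hφ hid hinv hattr d f hf
end
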